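/- Let μ_n be the mean and m_2(n) the variance of the Quicksort comparison-count generating polynomials g_n. Then the coefficient of variation √(m_2(n))/μ_n tends to 0 as n → ∞; that is, the distribution of the number of Quicksort comparisons is concentrated around its mean. -/

import Mathlib

/-!
Differentiating the recurrence once and twice at `t = 1` gives recurrences for `g_n'(1)` and
`g_n''(1)`, solved by strong induction with Knuth's closed forms
`μ_n = 2(n+1)H_n - 4n` and `m₂(n) = 7n² - 4(n+1)²H⁽²⁾_n - 2(n+1)H_n + 13n`.
The recurrence for `g_n''(1)` contains the convolution `∑_{i+j=n} μ_i μ_j`; it is handled through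
the harmonic convolutions `∑_{i+j=n} H_i/(j+1)` and `∑_{i+j=n} H_i H_j`.
Then `m₂(n) ≤ 20n²`, while `H_n ≥ log(n+1)` gives `μ_n ≥ n(2 log(n+1) - 4)`, so the coefficient of
variation is `O(1 / log n)`.
-/

open Filter Real Finset Polynomial Asymptotics
open scoped Topology

def harmonic₂ (n : ℕ) : ℚ := ∑ i ∈ range n, ((↑(i + 1) : ℚ) ^ 2)⁻¹

@[simp]
lemma harmonic₂_zero : harmonic₂ 0 = 0 := rfl

@[simp]
lemma harmonic₂_succ (n : ℕ) : harmonic₂ (n + 1) = harmonic₂ n + ((↑(n + 1) : ℚ) ^ 2)⁻¹ :=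
  sum_range_succ ..

namespace Finset.Nat

lemma sum_Icc_one_eq_sum_antidiagonal {M : Type*} [AddCommMonoid M] (f : ℕ → ℕ → M)
    (m : ℕ) :
    ∑ k ∈ Icc 1 (m + 1), f (k - 1) (m + 1 - k) = ∑ p ∈ antidiagonal m, f p.1 p.2 := by
  rw [sum_antidiagonal_eq_sum_range_succ f, ← Ico_add_one_right_eq_Icc,
    sum_Ico_eq_sum_range]
  refine sum_congr rfl fun i hi => ?_
  congr 1 <;> omega

lemma sum_antidiagonal_add {R : Type*} [CommSemiring R] (f : ℕ → R) (n : ℕ) :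
    ∑ p ∈ antidiagonal n, (f p.1 + f p.2) = 2 * ∑ i ∈ range (n + 1), f i := by
  have hswap : ∑ p ∈ antidiagonal n, f p.2 = ∑ p ∈ antidiagonal n, f p.1 :=
    sum_antidiagonal_swap (f := fun p => f p.1)
  rw [sum_add_distrib, hswap, ← two_mul, sum_antidiagonal_eq_sum_range_succ fun i _ => f i]

lemma two_mul_sum_antidiagonal_fst_add_one_mul {R : Type*} [CommSemiring R]
    (f : ℕ → R) (n : ℕ) :
    2 * ∑ p ∈ antidiagonal n, ((p.1 : R) + 1) * (f p.1 * f p.2)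
      = (n + 2) * ∑ p ∈ antidiagonal n, f p.1 * f p.2 := by
  conv_lhs => rw [two_mul]; enter [2]; rw [← Nat.sum_antidiagonal_swap]
  rw [← sum_add_distrib, mul_sum]
  refine sum_congr rfl fun p hp => ?_
  rw [← mem_antidiagonal.mp hp]
  simp only [Prod.fst_swap, Prod.snd_swap]
  push_cast
  ring

end Finset.Nat

lemma sum_range_harmonic (n : ℕ) : ∑ i ∈ range n, harmonic i = n * harmonic n - n := by
  induction n with
  | zero => simp
  | succ n ih =>
    rw [sum_range_succ, ih, harmonic_succ]
    field_simp
    push_cast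
    ring

lemma sum_antidiagonal_inv_mul_inv (n : ℕ) :
    ∑ p ∈ antidiagonal n, (((p.1 : ℚ) + 1) * ((p.2 : ℚ) + 1))⁻¹
      = 2 * harmonic (n + 1) / (n + 2) := by
  have hfrac : ∀ p ∈ antidiagonal n, (((p.1 : ℚ) + 1) * ((p.2 : ℚ) + 1))⁻¹
      = (((p.1 : ℚ) + 1)⁻¹ + ((p.2 : ℚ) + 1)⁻¹) / (n + 2) := by
    intro p hp
    rw [← mem_antidiagonal.mp hp]
    push_cast
    field_simp
    ring
  have hfst : ∑ p ∈ antidiagonal n, ((p.1 : ℚ) + 1)⁻¹ = harmonic (n + 1) := by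
    rw [Nat.sum_antidiagonal_eq_sum_range_succ (fun i _ => ((i : ℚ) + 1)⁻¹), harmonic]
    push_cast
    rfl
  rw [sum_congr rfl hfrac, ← sum_div, sum_add_distrib, hfst,
    ← Nat.sum_antidiagonal_swap]
  simp only [Prod.snd_swap]
  rw [hfst]
  ring

lemma sum_antidiagonal_harmonic_div (n : ℕ) :
    ∑ p ∈ antidiagonal n, harmonic p.1 / ((p.2 : ℚ) + 1)
      = harmonic (n + 1) ^ 2 - harmonic₂ (n + 1) := by
  induction n with
  | zero => simp
  | succ n ih =>
    have hsplit : ∀ p ∈ antidiagonal n, harmonic (p.1 + 1) / ((p.2 : ℚ) + 1)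
        = harmonic p.1 / ((p.2 : ℚ) + 1) + (((p.1 : ℚ) + 1) * ((p.2 : ℚ) + 1))⁻¹ := by
      intro p _
      rw [harmonic_succ]
      push_cast
      field_simp
    rw [Nat.sum_antidiagonal_succ, sum_congr rfl hsplit, sum_add_distrib, ih,
      sum_antidiagonal_inv_mul_inv, harmonic_succ (n + 1), harmonic₂_succ (n + 1)]
    simp only [harmonic_zero, zero_div, zero_add]
    push_cast
    field_simp
    ring

lemma sum_antidiagonal_harmonic_mul_harmonic (n : ℕ) :
    ∑ p ∈ antidiagonal n, harmonic p.1 * harmonic p.2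
      = (n + 1) * (harmonic n ^ 2 - harmonic₂ n) - 2 * n * harmonic n + 2 * n := by
  induction n with
  | zero => simp
  | succ n ih =>
    have hsplit : ∀ p ∈ antidiagonal n, harmonic p.1 * harmonic (p.2 + 1)
        = harmonic p.1 * harmonic p.2 + harmonic p.1 / ((p.2 : ℚ) + 1) := by
      intro p _
      rw [harmonic_succ]
      push_cast
      ring
    rw [Nat.sum_antidiagonal_succ', sum_congr rfl hsplit, sum_add_distrib, ih,
      sum_antidiagonal_harmonic_div, harmonic_succ, harmonic₂_succ]
    simp only [harmonic_zero, mul_zero, zero_add]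
    push_cast
    field_simp
    ring

lemma sum_antidiagonal_mul_harmonic (n : ℕ) :
    ∑ p ∈ antidiagonal n, (p.1 : ℚ) * harmonic p.2
      = n * (n + 1) / 2 * harmonic n - n * (3 * n + 1) / 4 := by
  induction n with
  | zero => simp
  | succ n ih =>
    have hsnd : ∑ p ∈ antidiagonal n, harmonic p.2 = ∑ i ∈ range (n + 1), harmonic i := by
      rw [← Nat.sum_antidiagonal_swap]
      exact Nat.sum_antidiagonal_eq_sum_range_succ (fun i _ => harmonic i) n
    rw [Nat.sum_antidiagonal_succ]
    simp only [Nat.cast_zero, zero_mul, zero_add, Nat.cast_add, Nat.cast_one, add_mul,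
      one_mul, sum_add_distrib]
    rw [ih, hsnd, sum_range_harmonic, harmonic_succ]
    push_cast
    field_simp
    ring

def quicksortMean (n : ℕ) : ℚ := 2 * (n + 1) * harmonic n - 4 * n

def quicksortVariance (n : ℕ) : ℚ :=
  7 * n ^ 2 - 4 * (n + 1) ^ 2 * harmonic₂ n - 2 * (n + 1) * harmonic n + 13 * n

def quicksortSecondFactorialMoment (n : ℕ) : ℚ :=
  quicksortMean n ^ 2 + quicksortVariance n - quicksortMean n

@[simp]
lemma quicksortMean_zero : quicksortMean 0 = 0 := by simp [quicksortMean]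

lemma quicksortMean_succ (n : ℕ) :
    quicksortMean (n + 1) = quicksortMean n + 2 * harmonic (n + 1) - 2 := by
  simp only [quicksortMean, harmonic_succ]
  push_cast
  field_simp
  ring

lemma quicksortMean_recurrence (m : ℕ) :
    (m + 1) * quicksortMean (m + 1)
      = m * (m + 1) + 2 * ∑ i ∈ range (m + 1), quicksortMean i := by
  induction m with
  | zero => norm_num [quicksortMean]
  | succ m ih =>
    have hstep : (m + 2) * quicksortMean (m + 2)
        = (m + 3) * quicksortMean (m + 1) + 2 * (m + 1) := by
      simp only [quicksortMean, harmonic_succ]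
      push_cast
      field_simp
      ring
    rw [sum_range_succ]
    push_cast
    linear_combination ih + hstep

lemma sum_antidiagonal_quicksortMean_mul_harmonic (n : ℕ) :
    ∑ p ∈ antidiagonal n, quicksortMean p.1 * harmonic p.2
      = (n + 2) * ((n + 1) * (harmonic n ^ 2 - harmonic₂ n) - 2 * n * harmonic n + 2 * n)
        - 2 * n * (n + 1) * harmonic n + n * (3 * n + 1) := by
  have hsplit : ∀ p ∈ antidiagonal n, quicksortMean p.1 * harmonic p.2
      = 2 * (((p.1 : ℚ) + 1) * (harmonic p.1 * harmonic p.2)) - 4 * ((p.1 : ℚ) * harmonic p.2) :=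
    fun p _ => by rw [quicksortMean]; ring
  rw [sum_congr rfl hsplit, sum_sub_distrib, ← mul_sum, ← mul_sum,
    Nat.two_mul_sum_antidiagonal_fst_add_one_mul, sum_antidiagonal_harmonic_mul_harmonic,
    sum_antidiagonal_mul_harmonic]
  ring

lemma sum_antidiagonal_quicksortMean_mul_quicksortMean_succ (m : ℕ) :
    ∑ p ∈ antidiagonal (m + 1), quicksortMean p.1 * quicksortMean p.2
      = ∑ p ∈ antidiagonal m, quicksortMean p.1 * quicksortMean p.2
        + 2 * ∑ p ∈ antidiagonal (m + 1), quicksortMean p.1 * harmonic p.2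
        - 2 * ∑ i ∈ range (m + 1), quicksortMean i := by
  rw [Nat.sum_antidiagonal_succ', Nat.sum_antidiagonal_succ',
    ← Nat.sum_antidiagonal_eq_sum_range_succ (fun i _ => quicksortMean i)]
  simp only [quicksortMean_zero, harmonic_zero, mul_zero, zero_add, quicksortMean_succ,
    mul_sum, ← sum_add_distrib, ← sum_sub_distrib]
  exact sum_congr rfl fun p _ => by ring

lemma quicksortSecondFactorialMoment_recurrence (m : ℕ) :
    (m + 1) * quicksortSecondFactorialMoment (m + 1)
      = (m + 1) * m * (m - 1) + 4 * m * ∑ i ∈ range (m + 1), quicksortMean i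
        + 2 * ∑ i ∈ range (m + 1), quicksortSecondFactorialMoment i
        + 2 * ∑ p ∈ antidiagonal m, quicksortMean p.1 * quicksortMean p.2 := by
  induction m with
  | zero => norm_num [quicksortSecondFactorialMoment, quicksortMean, quicksortVariance]
  | succ m ih =>
    -- The difference of the recurrences at `m + 1` and at `m` no longer involves the range sums.
    have hstep : (m + 2) * quicksortSecondFactorialMoment (m + 2)
        = (m + 3) * quicksortSecondFactorialMoment (m + 1) + 3 * m * (m + 1)
          + 4 * (m + 1) * quicksortMean (m + 1)
          + 4 * ∑ p ∈ antidiagonal (m + 1), quicksortMean p.1 * harmonic p.2 := by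
      rw [sum_antidiagonal_quicksortMean_mul_harmonic]
      simp only [quicksortSecondFactorialMoment, quicksortMean, quicksortVariance,
        harmonic_succ (m + 1), harmonic₂_succ (m + 1)]
      push_cast
      field_simp
      ring
    rw [sum_range_succ _ (m + 1), sum_range_succ _ (m + 1),
      sum_antidiagonal_quicksortMean_mul_quicksortMean_succ]
    push_cast
    linear_combination ih + hstep

namespace Polynomial

variable {R : Type*} [CommRing R]

lemma sum_support_coeff_mul_sub_sq (p : R[X]) (c : R) :
    ∑ k ∈ p.support, p.coeff k * ((k : R) - c) ^ 2
      = (derivative (derivative p)).eval 1 + (1 - 2 * c) * (derivative p).eval 1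
        + c ^ 2 * p.eval 1 := by
  let f : ℕ → R → R := fun k a => a * ((k : R) - c) ^ 2
  rw [← sum_def p f]
  induction p using Polynomial.induction_on' with
  | add p q hp hq =>
    rw [sum_add_index p q f (fun _ => zero_mul _) (fun _ _ _ => add_mul ..), hp, hq]
    simp only [map_add, eval_add]
    ring
  | monomial n a =>
    rw [sum_monomial_index a f (zero_mul _)]
    simp only [f]
    rcases n with _ | _ | n <;> simp <;> ring

lemma eval_one_derivative_X_pow_mul (m : ℕ) (p : R[X]) :
    (derivative (X ^ m * p)).eval 1 = m * p.eval 1 + (derivative p).eval 1 := by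
  simp [derivative_mul, derivative_X_pow]

lemma eval_one_derivative_derivative_X_pow_mul (m : ℕ) (p : R[X]) :
    (derivative (derivative (X ^ m * p))).eval 1
      = m * (m - 1) * p.eval 1 + 2 * m * (derivative p).eval 1
        + (derivative (derivative p)).eval 1 := by
  rcases m with _ | m
  · simp
  · simp [derivative_mul, derivative_X_pow]
    ring

end Polynomial

section ConvolutionAtOne

variable {R : Type*} [CommRing R] {g : ℕ → R[X]} (hg : ∀ i, (g i).eval 1 = 1)
include hg

lemma eval_one_sum_antidiagonal_mul (n : ℕ) :
    (∑ p ∈ antidiagonal n, g p.1 * g p.2).eval 1 = n + 1 := by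
  simp [eval_finsetSum, hg]

lemma eval_one_derivative_sum_antidiagonal_mul (n : ℕ) :
    (derivative (∑ p ∈ antidiagonal n, g p.1 * g p.2)).eval 1
      = 2 * ∑ i ∈ range (n + 1), (derivative (g i)).eval 1 := by
  simp only [derivative_sum, derivative_mul, eval_finsetSum, eval_add, eval_mul, hg,
    mul_one, one_mul]
  exact Nat.sum_antidiagonal_add (fun i => (derivative (g i)).eval 1) n

lemma eval_one_derivative_derivative_sum_antidiagonal_mul (n : ℕ) :
    (derivative (derivative (∑ p ∈ antidiagonal n, g p.1 * g p.2))).eval 1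
      = 2 * ∑ i ∈ range (n + 1), (derivative (derivative (g i))).eval 1
        + 2 * ∑ p ∈ antidiagonal n, (derivative (g p.1)).eval 1 * (derivative (g p.2)).eval 1 := by
  simp only [derivative_sum, derivative_mul, derivative_add, eval_finsetSum, eval_add, eval_mul,
    hg, mul_one, one_mul]
  rw [← Nat.sum_antidiagonal_add, mul_sum, ← sum_add_distrib]
  exact sum_congr rfl fun p _ => by ring

end ConvolutionAtOne

section Quicksort

variable {g : ℕ → ℚ[X]} (hg0 : g 0 = 1)
  (hrec : ∀ m : ℕ, ((m : ℚ) + 1) • g (m + 1) = X ^ m * ∑ p ∈ antidiagonal m, g p.1 * g p.2)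
include hg0 hrec

lemma quicksort_eval_one (n : ℕ) : (g n).eval 1 = 1 := by
  induction n using Nat.strong_induction_on with
  | _ n ih =>
    rcases n with _ | m
    · simp [hg0]
    · have h := congrArg (eval 1) (hrec m)
      have hsum : (∑ p ∈ antidiagonal m, g p.1 * g p.2).eval 1 = m + 1 := by
        rw [eval_finsetSum, sum_congr rfl fun p hp => by
          rw [eval_mul, ih _ (Nat.antidiagonal.fst_lt hp), ih _ (Nat.antidiagonal.snd_lt hp)]]
        simp
      rw [eval_smul, eval_mul, hsum, eval_pow, eval_X, one_pow, one_mul, smul_eq_mul] at h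
      exact (mul_eq_left₀ (by positivity)).mp h

lemma quicksort_eval_one_derivative_recurrence (m : ℕ) :
    (m + 1) * (derivative (g (m + 1))).eval 1
      = m * (m + 1) + 2 * ∑ i ∈ range (m + 1), (derivative (g i)).eval 1 := by
  have hg := quicksort_eval_one hg0 hrec
  have h := congrArg (fun p => (derivative p).eval 1) (hrec m)
  simp only [derivative_smul, eval_smul, smul_eq_mul, eval_one_derivative_X_pow_mul,
    eval_one_sum_antidiagonal_mul hg, eval_one_derivative_sum_antidiagonal_mul hg] at h
  exact h

lemma quicksort_eval_one_derivative (n : ℕ) : (derivative (g n)).eval 1 = quicksortMean n := by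
  induction n using Nat.strong_induction_on with
  | _ n ih =>
    rcases n with _ | m
    · simp [hg0]
    · have hsum : ∑ i ∈ range (m + 1), (derivative (g i)).eval 1
          = ∑ i ∈ range (m + 1), quicksortMean i :=
        sum_congr rfl fun i hi => ih i (mem_range.mp hi)
      have h := quicksort_eval_one_derivative_recurrence hg0 hrec m
      rw [hsum, ← quicksortMean_recurrence] at h
      exact mul_left_cancel₀ (by positivity) h

lemma quicksort_eval_one_derivative_derivative_recurrence (m : ℕ) :
    (m + 1) * (derivative (derivative (g (m + 1)))).eval 1
      = (m + 1) * m * (m - 1) + 4 * m * ∑ i ∈ range (m + 1), (derivative (g i)).eval 1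
        + 2 * ∑ i ∈ range (m + 1), (derivative (derivative (g i))).eval 1
        + 2 * ∑ p ∈ antidiagonal m,
          (derivative (g p.1)).eval 1 * (derivative (g p.2)).eval 1 := by
  have hg := quicksort_eval_one hg0 hrec
  have h := congrArg (fun p => (derivative (derivative p)).eval 1) (hrec m)
  simp only [derivative_smul, eval_smul, smul_eq_mul, eval_one_derivative_derivative_X_pow_mul,
    eval_one_sum_antidiagonal_mul hg, eval_one_derivative_sum_antidiagonal_mul hg,
    eval_one_derivative_derivative_sum_antidiagonal_mul hg] at h
  linear_combination h

lemma quicksort_eval_one_derivative_derivative (n : ℕ) :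
    (derivative (derivative (g n))).eval 1 = quicksortSecondFactorialMoment n := by
  induction n using Nat.strong_induction_on with
  | _ n ih =>
    rcases n with _ | m
    · simp [hg0, quicksortSecondFactorialMoment, quicksortMean, quicksortVariance]
    · have hmean := quicksort_eval_one_derivative hg0 hrec
      have hsum : ∑ i ∈ range (m + 1), (derivative (derivative (g i))).eval 1
          = ∑ i ∈ range (m + 1), quicksortSecondFactorialMoment i :=
        sum_congr rfl fun i hi => ih i (mem_range.mp hi)
      have h := quicksort_eval_one_derivative_derivative_recurrence hg0 hrec m
      simp only [hmean] at h
      rw [hsum, ← quicksortSecondFactorialMoment_recurrence] at h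
      exact mul_left_cancel₀ (by positivity) h

lemma quicksort_sum_coeff_mul_sub_sq (n : ℕ) :
    ∑ k ∈ (g n).support, (g n).coeff k * ((k : ℚ) - quicksortMean n) ^ 2
      = quicksortVariance n := by
  rw [sum_support_coeff_mul_sub_sq, quicksort_eval_one_derivative_derivative hg0 hrec,
    quicksort_eval_one_derivative hg0 hrec, quicksort_eval_one hg0 hrec,
    quicksortSecondFactorialMoment]
  ring

end Quicksort

lemma quicksortVariance_le (n : ℕ) : quicksortVariance n ≤ 20 * n ^ 2 := by
  have hH : 0 ≤ harmonic n := sum_nonneg fun _ _ => by positivity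
  have hH₂ : 0 ≤ harmonic₂ n := sum_nonneg fun _ _ => by positivity
  have hn : (n : ℚ) ≤ n ^ 2 := by exact_mod_cast Nat.le_self_pow two_ne_zero n
  rw [quicksortVariance]
  nlinarith

lemma mul_two_mul_log_sub_four_le_quicksortMean (n : ℕ) :
    n * (2 * log (n + 1) - 4) ≤ (quicksortMean n : ℝ) := by
  have hH : (0 : ℝ) ≤ harmonic n := by exact_mod_cast sum_nonneg fun _ _ => by positivity
  have hlog : log (n + 1) ≤ (harmonic n : ℝ) := by exact_mod_cast log_add_one_le_harmonic n
  push_cast [quicksortMean]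
  nlinarith

lemma tendsto_sqrt_quicksortVariance_div_quicksortMean :
    Tendsto (fun n : ℕ => √(quicksortVariance n : ℝ) / (quicksortMean n : ℝ)) atTop (𝓝 0) := by
  have hlog : Tendsto (fun n : ℕ => 2 * log (n + 1) - 4) atTop atTop :=
    tendsto_atTop_add_const_right _ _ <| (tendsto_log_atTop.comp <|
      tendsto_atTop_add_const_right _ 1 tendsto_natCast_atTop_atTop).const_mul_atTop two_pos
  refine tendsto_of_tendsto_of_tendsto_of_le_of_le' tendsto_const_nhds
    ((tendsto_const_nhds (x := √20)).div_atTop hlog) ?_ ?_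
  all_goals filter_upwards [hlog.eventually_gt_atTop 0, eventually_gt_atTop 0] with n hL hn
  all_goals have hmean := mul_two_mul_log_sub_four_le_quicksortMean n
  · have : (0 : ℝ) ≤ quicksortMean n := le_trans (by positivity) hmean
    positivity
  · have hvar : √(quicksortVariance n : ℝ) ≤ √20 * n := by
      rw [← sqrt_sq (Nat.cast_nonneg (α := ℝ) n), ← sqrt_mul (by norm_num)]
      exact sqrt_le_sqrt (by exact_mod_cast quicksortVariance_le n)
    calc √(quicksortVariance n : ℝ) / (quicksortMean n : ℝ)
        ≤ √20 * n / (n * (2 * log (n + 1) - 4)) :=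
          div_le_div₀ (by positivity) hvar (by positivity) hmean
      _ = √20 / (2 * log (n + 1) - 4) := by
          rw [mul_comm (n : ℝ), mul_div_mul_right _ _ (by positivity)]

theorem quicksort_coefficient_of_variation_tendsto_zero
    (g : ℕ → Polynomial ℚ)
    (hg0 : g 0 = 1)
    (hgrec : ∀ n : ℕ, 1 ≤ n →
      (n : ℚ) • g n = Polynomial.X ^ (n - 1) *
        ∑ k ∈ Finset.Icc 1 n, g (k - 1) * g (n - k))
    (μ : ℕ → ℚ)
    (hμ : ∀ n, μ n = (Polynomial.derivative (g n)).eval 1)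
    (m : ℕ → ℕ → ℚ)
    (hm : ∀ r n, m r n =
      ∑ k ∈ (g n).support, (g n).coeff k * ((k : ℚ) - μ n) ^ r) :
    Filter.Tendsto (fun n : ℕ => Real.sqrt (m 2 n : ℝ) / (μ n : ℝ))
      Filter.atTop (nhds 0) := by
  have hrec (k : ℕ) :
      ((k : ℚ) + 1) • g (k + 1) = X ^ k * ∑ p ∈ antidiagonal k, g p.1 * g p.2 := by
    have h := hgrec (k + 1) k.succ_pos
    rwa [Nat.sum_Icc_one_eq_sum_antidiagonal (fun i j => g i * g j), Nat.add_sub_cancel,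
      Nat.cast_succ] at h
  have hmean (n : ℕ) : μ n = quicksortMean n :=
    (hμ n).trans (quicksort_eval_one_derivative hg0 hrec n)
  have hvar (n : ℕ) : m 2 n = quicksortVariance n := by
    rw [hm, hmean, quicksort_sum_coeff_mul_sub_sq hg0 hrec]
  simpa only [hmean, hvar] using tendsto_sqrt_quicksortVariance_div_quicksortMean
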